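/- Let w ∈ W, α ∈ Φ⁺ such that w → ws_α is a quantum edge in QB(W), and let γ ≠ −wα be a maximal inversion of w. Then γ is also a maximal inversion of ws_α and ⟨−w⁻¹γ^∨, α⟩ ≥ 0. -/
import Mathlib


open Classical

/-- A reduced crystallographic root system with a chosen positive system,
inside a `ℚ`-vector space `V`.  `pairing α β` is `⟨α^∨, β⟩`. -/
structure RootSystemData (V : Type*) [AddCommGroup V] [Module ℚ V] where
  Φ : Set V
  finite : Φ.Finite
  pairing : V → Module.Dual ℚ V
  zero_not_mem : (0 : V) ∉ Φ
  neg_mem : ∀ α ∈ Φ, -α ∈ Φ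
  pairing_self : ∀ α ∈ Φ, pairing α α = 2
  pairing_int : ∀ α ∈ Φ, ∀ β ∈ Φ, ∃ n : ℤ, pairing α β = (n : ℚ)
  reflect_mem : ∀ α ∈ Φ, ∀ β ∈ Φ, β - pairing α β • α ∈ Φ
  reduced : ∀ α ∈ Φ, ∀ c : ℚ, c • α ∈ Φ → c = 1 ∨ c = -1
  pos : Set V
  pos_sub : pos ⊆ Φ
  mem_pos_or_neg : ∀ α ∈ Φ, α ∈ pos ∨ -α ∈ pos
  not_pos_and_neg : ∀ α ∈ pos, -α ∉ pos
  pos_add : ∀ α ∈ pos, ∀ β ∈ pos, α + β ∈ Φ → α + β ∈ pos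

namespace RootSystemData

variable {V : Type*} [AddCommGroup V] [Module ℚ V] (R : RootSystemData V)

/-- The reflection `s_α` as a linear endomorphism of `V`. -/
noncomputable def refl (α : V) : Module.End ℚ V := 1 - (R.pairing α).smulRight α

/-- Indicator function `Φ⁺` of the positive roots. -/
noncomputable def ind (β : V) : ℤ := if β ∈ R.pos then 1 else 0

/-- `2ρ`, the sum of the positive roots. -/
noncomputable def twoRho : V := ∑ᶠ α ∈ R.pos, α

/-- The length of a (Weyl group) element: the number of positive roots sent to
negative roots. -/
noncomputable def len (f : Module.End ℚ V) : ℕ := {α | α ∈ R.pos ∧ f α ∉ R.pos}.ncard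

/-- `f` belongs to the Weyl group, i.e. is a product of reflections. -/
def IsWeyl (f : Module.End ℚ V) : Prop :=
  f ∈ Submonoid.closure {g : Module.End ℚ V | ∃ α ∈ R.pos, g = R.refl α}

/-- A quantum root: `ℓ(s_α) = ⟨α^∨, 2ρ⟩ - 1`. -/
def IsQuantumRoot (α : V) : Prop :=
  α ∈ R.pos ∧ (R.len (R.refl α) : ℚ) = R.pairing α R.twoRho - 1

/-- Edges of the quantum Bruhat graph `QB(W)`, together with their weights:
a Bruhat edge `w → w s_α` of weight `0` when `ℓ(w s_α) = ℓ(w) + 1`, and a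
quantum edge of weight `α^∨` when `ℓ(w s_α) = ℓ(w) + 1 - ⟨α^∨, 2ρ⟩`. -/
def Edge (u v : Module.End ℚ V) (ω : Module.Dual ℚ V) : Prop :=
  ∃ α ∈ R.pos, v = u * R.refl α ∧
    ((R.len v = R.len u + 1 ∧ ω = 0) ∨
     ((R.len v : ℚ) = (R.len u : ℚ) + 1 - R.pairing α R.twoRho ∧ ω = R.pairing α))

/-- Paths in the quantum Bruhat graph; `Path R u v ω n` means there is a path
from `u` to `v` with `n` edges and total weight `ω`. -/
inductive Path (R : RootSystemData V) :
    Module.End ℚ V → Module.End ℚ V → Module.Dual ℚ V → ℕ → Prop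
  | nil (u : Module.End ℚ V) : Path R u u 0 0
  | cons {u v w : Module.End ℚ V} {ω' ω : Module.Dual ℚ V} {n : ℕ} :
      R.Edge u v ω' → Path R v w ω n → Path R u w (ω' + ω) (n + 1)

/-- `ω` is the weight `wt(u ⇒ v)` of a shortest path from `u` to `v` in `QB(W)`. -/
def IsWt (u v : Module.End ℚ V) (ω : Module.Dual ℚ V) : Prop :=
  ∃ n, R.Path u v ω n ∧ ∀ (m : ℕ) (ω' : Module.Dual ℚ V), R.Path u v ω' m → n ≤ m

/-- The distance `d(u ⇒ v)` in the quantum Bruhat graph. -/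
noncomputable def qbDist (u v : Module.End ℚ V) : ℕ :=
  sInf {n | ∃ ω, R.Path u v ω n}

/-- The cone of nonnegative integral sums of positive coroots; `μ ≤ ν` in the
coroot lattice iff `ν - μ` lies in this cone. -/
def corootCone : AddSubmonoid (Module.Dual ℚ V) :=
  AddSubmonoid.closure {d | ∃ α ∈ R.pos, d = R.pairing α}

/-- The coroot lattice `ℤΦ^∨`. -/
def corootLattice : AddSubgroup (Module.Dual ℚ V) :=
  AddSubgroup.closure {d | ∃ α ∈ R.pos, d = R.pairing α}


/-- The set of inversions of `w`, in terms of the inverse `winv` of `w`. -/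
def inversions (winv : Module.End ℚ V) : Set V :=
  {α | α ∈ R.pos ∧ winv α ∉ R.pos}

/-- `γ` is a maximal inversion of `w`. -/
def IsMaxInv (winv : Module.End ℚ V) (γ : V) : Prop :=
  γ ∈ R.inversions winv ∧
    ∀ α ∈ R.inversions winv, α ≠ γ → α - γ ∉ AddSubmonoid.closure R.pos

section Aux

lemma refl_apply (α x : V) : R.refl α x = x - R.pairing α x • α := by
  simp [refl, LinearMap.sub_apply, LinearMap.smulRight_apply]

lemma refl_refl {α : V} (hα : α ∈ R.Φ) (x : V) : R.refl α (R.refl α x) = x := by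
  have h2 := R.pairing_self α hα
  simp only [refl_apply, map_sub, map_smul, smul_eq_mul, h2]
  module

lemma refl_mem {α x : V} (hα : α ∈ R.Φ) (hx : x ∈ R.Φ) : R.refl α x ∈ R.Φ := by
  rw [refl_apply]; exact R.reflect_mem α hα x hx

lemma pos_mem {x : V} (hx : x ∈ R.pos) : x ∈ R.Φ := R.pos_sub hx

lemma neg_pos {x : V} (hx : x ∈ R.Φ) (h : x ∉ R.pos) : -x ∈ R.pos :=
  (R.mem_pos_or_neg x hx).resolve_left h

lemma not_pos_of_neg_pos {x : V} (h : -x ∈ R.pos) : x ∉ R.pos := by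
  intro hx; exact R.not_pos_and_neg x hx h

lemma ne_zero_of_mem {x : V} (hx : x ∈ R.Φ) : x ≠ 0 := by
  rintro rfl; exact R.zero_not_mem hx

end Aux
section Aux2

lemma refl_mul_refl {α : V} (hα : α ∈ R.Φ) : R.refl α * R.refl α = 1 := by
  apply LinearMap.ext; intro x
  simpa using R.refl_refl hα x

lemma refl_injective {α : V} (hα : α ∈ R.Φ) : Function.Injective (R.refl α) := by
  intro a b h
  have := congrArg (R.refl α) h
  rwa [R.refl_refl hα, R.refl_refl hα] at this

lemma weyl_maps {w : Module.End ℚ V} (hw : R.IsWeyl w) : ∀ x ∈ R.Φ, w x ∈ R.Φ := by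
  refine Submonoid.closure_induction ?_ ?_ ?_ hw
  · rintro f ⟨β, hβ, rfl⟩ x hx
    exact R.refl_mem (R.pos_mem hβ) hx
  · intro x hx; simpa using hx
  · intro f g _ _ hf hg x hx
    have : (f * g) x = f (g x) := rfl
    rw [this]; exact hf _ (hg _ hx)

lemma inv_maps {w winv : Module.End ℚ V} (hwΦ : ∀ x ∈ R.Φ, w x ∈ R.Φ)
    (h₂ : winv * w = 1) : ∀ x ∈ R.Φ, winv x ∈ R.Φ := by
  have hinj : Function.Injective w := by
    intro a b h
    have := congrArg winv h
    have e : ∀ y, winv (w y) = y := fun y => by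
      have : (winv * w) y = (1 : Module.End ℚ V) y := by rw [h₂]
      simpa using this
    rwa [e, e] at this
  have hbij : Set.BijOn w R.Φ R.Φ :=
    (R.finite.injOn_iff_bijOn_of_mapsTo (fun x hx => hwΦ x hx)).mp hinj.injOn
  intro x hx
  obtain ⟨y, hy, hyx⟩ := hbij.surjOn hx
  have e : winv (w y) = y := by
    have : (winv * w) y = (1 : Module.End ℚ V) y := by rw [h₂]
    simpa using this
  rw [← hyx, e]; exact hy

end Aux2
/-- auxiliary recurrence aₙ₊₂ = t aₙ₊₁ - aₙ. -/
private def seqA (t : ℚ) : ℕ → ℚ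
  | 0 => 0
  | 1 => 1
  | (n+2) => t * seqA t (n+1) - seqA t n

private lemma seqA_abs {t : ℚ} (ht : 2 ≤ |t|) : ∀ n, |seqA t n| < |seqA t (n+1)| := by
  intro n
  induction n using Nat.twoStepInduction with
  | zero => simp [seqA]
  | one =>
    have h2 : seqA t 2 = t := by simp [seqA]
    have h1 : seqA t 1 = 1 := rfl
    rw [h1, h2]
    have : |(1:ℚ)| = 1 := by norm_num
    rw [this]; linarith
  | more n ih1 ih2 =>
    have h1 : |t * seqA t (n+2)| - |seqA t (n+1)| ≤ |t * seqA t (n+2) - seqA t (n+1)| :=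
      abs_sub_abs_le_abs_sub _ _
    have h2 : |t * seqA t (n+2)| = |t| * |seqA t (n+2)| := abs_mul _ _
    have h3 : (0:ℚ) ≤ |seqA t (n+2)| := abs_nonneg _
    have e : seqA t (n+3) = t * seqA t (n+2) - seqA t (n+1) := rfl
    rw [e]
    nlinarith [ih1, ih2]

private lemma seqA_ne_zero {t : ℚ} (ht : 2 ≤ |t|) (n : ℕ) : seqA t (n+1) ≠ 0 := by
  have h := seqA_abs ht n
  have h0 := abs_nonneg (seqA t n)
  intro hz
  rw [hz] at h; simp at h; linarith

section Aux3

lemma pairing_bounds {x y : V} (hx : x ∈ R.Φ) (hy : y ∈ R.Φ)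
    (hne : x ≠ y) (hne' : x ≠ -y) (hp : R.pairing x y ≠ 0) :
    1 ≤ R.pairing x y * R.pairing y x ∧ R.pairing x y * R.pairing y x ≤ 3 := by
  set p := R.pairing x y with hpdef
  set q := R.pairing y x with hqdef
  by_contra hcon
  -- reduce to |p*q - 2| ≥ 2
  have habs : 2 ≤ |p * q - 2| := by
    obtain ⟨m, hm⟩ := R.pairing_int x hx y hy
    obtain ⟨n, hn⟩ := R.pairing_int y hy x hx
    rw [← hpdef] at hm; rw [← hqdef] at hn
    rw [hm, hn] at hcon ⊢
    rw [not_and_or] at hcon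
    have hmn : m * n ≤ 0 ∨ 4 ≤ m * n := by
      rcases hcon with h | h
      · left
        push_neg at h
        have : m * n < 1 := by exact_mod_cast (by push_cast; linarith : ((m*n : ℤ) : ℚ) < 1)
        omega
      · right
        push_neg at h
        have : 3 < m * n := by exact_mod_cast (by push_cast; linarith : (3:ℚ) < ((m*n : ℤ) : ℚ))
        omega
    have hZ : 2 ≤ |m * n - 2| := by
      rcases abs_cases (m*n - 2) with ⟨e1, _⟩ | ⟨e1, _⟩ <;> omega
    calc (2:ℚ) = ((2:ℤ):ℚ) := by norm_num
      _ ≤ ((|m*n-2| : ℤ) : ℚ) := by exact_mod_cast hZ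
      _ = |((m*n-2 : ℤ) : ℚ)| := by rw [Int.cast_abs]
      _ = |(m:ℚ)*(n:ℚ) - 2| := by push_cast; ring_nf
  set t : ℚ := p * q - 2 with htdef
  set u : Module.End ℚ V := R.refl y * R.refl x with hudef
  have happ : ∀ z, u z = R.refl y (R.refl x z) := fun z => rfl
  have hux : u x = q • y - x := by
    have e1 : R.refl x x = -x := by rw [refl_apply, R.pairing_self x hx]; module
    rw [happ, e1, refl_apply, map_neg, hqdef]; module
  have huy : u y = (p * q - 1) • y - p • x := by
    have e1 : R.refl x y = y - p • x := by rw [refl_apply]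
    rw [happ, e1, refl_apply, map_sub, map_smul, R.pairing_self y hy, ← hqdef,
      smul_eq_mul]
    module
  have hu2 : u (u y) = t • u y - y := by
    have e : u ((p*q-1) • y - p • x) = (p*q-1) • u y - p • u x := by
      rw [map_sub, map_smul, map_smul]
    calc u (u y) = u ((p*q-1) • y - p • x) := by rw [← huy]
      _ = (p*q-1) • u y - p • u x := e
      _ = (p*q-1) • ((p * q - 1) • y - p • x) - p • (q • y - x) := by rw [hux, huy]
      _ = t • ((p * q - 1) • y - p • x) - y := by rw [htdef]; module
      _ = t • u y - y := by rw [← huy]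
  -- the orbit sequence
  set f : ℕ → V := fun n => (u ^ n) y with hfdef
  have hstep : ∀ n, f (n + 1) = u (f n) := by
    intro n
    show (u ^ (n+1)) y = u ((u^n) y)
    rw [pow_succ']; rfl
  have hrec : ∀ n, f (n+2) = t • f (n+1) - f n := by
    intro n
    have e1 : f (n+2) = (u^n) ((u^2) y) := by
      show (u ^ (n+2)) y = _
      rw [pow_add]; rfl
    have e2 : f (n+1) = (u^n) (u y) := by
      show (u ^ (n+1)) y = _
      rw [pow_add, pow_one]; rfl
    have e3 : (u^2) y = t • (u y) - y := by rw [sq]; exact hu2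
    rw [e1, e3, map_sub, map_smul, ← e2]
  -- closed form
  have hform : ∀ n, f (n+1) = seqA t (n+1) • u y - seqA t n • y := by
    intro n
    induction n using Nat.twoStepInduction with
    | zero =>
      have : f 1 = u (f 0) := hstep 0
      rw [this]
      show u y = seqA t 1 • u y - seqA t 0 • y
      simp [seqA]
    | one =>
      have h2 : f 2 = t • f 1 - f 0 := hrec 0
      have hf1 : f 1 = u (f 0) := hstep 0
      have hf0 : f 0 = y := rfl
      rw [h2, hf1, hf0]
      show t • u y - y = seqA t 2 • u y - seqA t 1 • y
      have e2 : seqA t 2 = t := by simp [seqA]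
      have e1 : seqA t 1 = 1 := rfl
      rw [e1, e2, one_smul]
    | more n ih1 ih2 =>
      have h3 : f (n+3) = t • f (n+2) - f (n+1) := hrec (n+1)
      rw [h3, ih2, ih1]
      have e3 : seqA t (n+3) = t * seqA t (n+2) - seqA t (n+1) := rfl
      have e2 : seqA t (n+2) = t * seqA t (n+1) - seqA t n := rfl
      simp only [show n+1+1 = n+2 from rfl]
      rw [e3, e2]
      module
  -- find a return time
  have hfΦ : ∀ n, f n ∈ R.Φ := by
    intro n
    induction n with
    | zero => exact hy
    | succ n ih =>
      rw [hstep, happ]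
      exact R.refl_mem hy (R.refl_mem hx ih)
  have : Finite ↥R.Φ := R.finite.to_subtype
  obtain ⟨i, j, hij, hfij⟩ :=
    Finite.exists_ne_map_eq_of_infinite (fun n : ℕ => (⟨f n, hfΦ n⟩ : ↥R.Φ))
  have huinj : Function.Injective u := by
    intro a b h
    rw [happ, happ] at h
    exact R.refl_injective hx (R.refl_injective hy h)
  have hpowinj : ∀ i : ℕ, Function.Injective (⇑(u ^ i)) := by
    intro i
    induction i with
    | zero => simp [Function.Injective]
    | succ i ih =>
      intro a b h
      rw [pow_succ] at h
      exact huinj (ih h)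
  have hfeq : ∀ {i j : ℕ}, i < j → f i = f j → f (j - i) = y := by
    intro i j hlt heq
    have e : ∀ k, f (i + k) = (u ^ i) (f k) := by
      intro k
      show (u ^ (i+k)) y = _
      rw [pow_add]; rfl
    have h' : (u ^ i) (f (j - i)) = (u ^ i) (f 0) := by
      rw [← e, ← e]
      have hji : i + (j - i) = j := by omega
      rw [hji, Nat.add_zero, heq]
    exact hpowinj i h'
  have hfij' : f i = f j := congrArg Subtype.val hfij
  obtain ⟨d, hd1, hfd⟩ : ∃ d, 1 ≤ d ∧ f d = y := by
    rcases Nat.lt_or_ge i j with h | h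
    · exact ⟨j - i, by omega, hfeq h hfij'⟩
    · have h' : j < i := by omega
      exact ⟨i - j, by omega, hfeq h' hfij'.symm⟩
  obtain ⟨e, rfl⟩ : ∃ e, d = e + 1 := ⟨d - 1, by omega⟩
  -- derive linear dependence
  have h1 := hform e
  rw [hfd, huy] at h1
  -- h1 : y = a • ((p*q-1) • y - p • x) - b • y
  have key : (seqA t (e+1) * p) • x =
      (seqA t (e+1) * (p*q-1) - seqA t e - 1) • y := by
    have h2 : (seqA t (e+1) * (p*q-1) - seqA t e - 1) • y - (seqA t (e+1) * p) • x
        = (seqA t (e+1) • ((p*q-1) • y - p • x) - seqA t e • y) - y := by module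
    rw [← h1, sub_self] at h2
    rw [sub_eq_zero] at h2
    exact h2.symm
  have hc1 : seqA t (e+1) * p ≠ 0 := mul_ne_zero (seqA_ne_zero habs e) hp
  have hxy : x = ((seqA t (e+1) * (p*q-1) - seqA t e - 1) / (seqA t (e+1) * p)) • y := by
    rw [div_eq_inv_mul, mul_smul, ← key, ← mul_smul, inv_mul_cancel₀ hc1, one_smul]
  rcases R.reduced y hy _ (hxy ▸ hx) with hc | hc
  · rw [hc, one_smul] at hxy; exact hne hxy
  · rw [hc, neg_one_smul] at hxy; exact hne' hxy

end Aux3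
section Aux4

lemma pos_ne_neg {x y : V} (hx : x ∈ R.pos) (hy : y ∈ R.pos) : x ≠ -y := by
  rintro rfl; exact R.not_pos_and_neg y hy hx

lemma one_le_pairing_of_inv {α β : V} (hα : α ∈ R.pos) (hβ : β ∈ R.pos)
    (h : R.refl α β ∉ R.pos) : 1 ≤ R.pairing α β := by
  have hαΦ := R.pos_mem hα
  have hβΦ := R.pos_mem hβ
  by_cases hba : β = α
  · rw [hba, R.pairing_self α hαΦ]; norm_num
  obtain ⟨n, hn⟩ := R.pairing_int α hαΦ β hβΦ
  rcases le_or_gt 1 n with h1 | h1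
  · rw [hn]; exact_mod_cast h1
  have hn0 : n ≠ 0 := by
    rintro rfl
    apply h
    have : R.refl α β = β := by rw [refl_apply, hn]; push_cast; module
    rwa [this]
  have hb := R.pairing_bounds hαΦ hβΦ (Ne.symm hba) (R.pos_ne_neg hα hβ)
    (by rw [hn]; exact_mod_cast hn0)
  obtain ⟨n', hn'⟩ := R.pairing_int β hβΦ α hαΦ
  rw [hn, hn'] at hb
  have hb1 : 1 ≤ n * n' := by exact_mod_cast hb.1
  have hb3 : n * n' ≤ 3 := by exact_mod_cast hb.2
  -- n ≤ -1 here
  have hnle : n ≤ -1 := by omega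
  have hn'le : n' ≤ -1 := by nlinarith
  have hdis : n = -1 ∨ n' = -1 := by
    by_contra hcon; push_neg at hcon
    have e1 : n ≤ -2 := by omega
    have e2 : n' ≤ -2 := by omega
    nlinarith
  have hsum : β + α ∈ R.pos := by
    -- in all cases β + α is a root
    have : β + α ∈ R.Φ := by
      rcases hdis with hc | hc
      · have : R.refl α β = β + α := by rw [refl_apply, hn, hc]; push_cast; module
        rw [← this]; exact R.refl_mem hαΦ hβΦ
      · have e : R.refl β α = α + β := by rw [refl_apply, hn', hc]; push_cast; module
        have := R.refl_mem hβΦ hαΦ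
        rw [e, add_comm] at this; exact this
    exact R.pos_add β hβ α hα this
  rcases hdis with hc | hc
  · exfalso; apply h
    have : R.refl α β = β + α := by rw [refl_apply, hn, hc]; push_cast; module
    rwa [this]
  -- n' = -1, n ∈ {-2, -3}
  have hn3 : -3 ≤ n := by nlinarith
  have hpair_sum : R.pairing α (β + α) = (n : ℚ) + 2 := by
    rw [map_add, hn, R.pairing_self α hαΦ]
  interval_cases n
  · -- n = -3
    have h2 : β + α + α ∈ R.pos := by
      have e : R.refl α (β + α) = β + α + α := by
        rw [refl_apply, hpair_sum]; push_cast; module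
      have : β + α + α ∈ R.Φ := by
        rw [← e]; exact R.refl_mem hαΦ (R.pos_mem hsum)
      exact R.pos_add _ hsum _ hα this
    exfalso; apply h
    have e : R.refl α β = β + α + α + α := by rw [refl_apply, hn]; push_cast; module
    rw [e]
    apply R.pos_add _ h2 _ hα
    rw [← e]; exact R.refl_mem hαΦ hβΦ
  · -- n = -2
    exfalso; apply h
    have e : R.refl α β = β + α + α := by rw [refl_apply, hn]; push_cast; module
    rw [e]
    apply R.pos_add _ hsum _ hα
    rw [← e]; exact R.refl_mem hαΦ hβΦ
  · -- n = -1
    exfalso; apply h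
    have e : R.refl α β = β + α := by rw [refl_apply, hn]; push_cast; module
    rwa [e]

end Aux4
section Aux5

lemma pairing_refl_self {α β : V} (hα : α ∈ R.Φ) :
    R.pairing α (R.refl α β) = - R.pairing α β := by
  rw [refl_apply, map_sub, map_smul, R.pairing_self α hα, smul_eq_mul]; ring

lemma pos_finite : R.pos.Finite := R.finite.subset R.pos_sub

lemma len_refl_eq_card {α : V} :
    (R.len (R.refl α) : ℚ) =
      ((R.pos_finite.toFinset.filter (fun β => R.refl α β ∉ R.pos)).card : ℚ) := by
  congr 1
  rw [len]
  have : {β | β ∈ R.pos ∧ R.refl α β ∉ R.pos} =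
      ↑(R.pos_finite.toFinset.filter (fun β => R.refl α β ∉ R.pos)) := by
    ext β
    simp [Set.Finite.mem_toFinset]
  rw [this, Set.ncard_coe_finset]

lemma quantum_pairing_one {α : V} (hqr : R.IsQuantumRoot α) {β : V}
    (hβ : β ∈ R.pos) (hrβ : R.refl α β ∉ R.pos) (hne : β ≠ α) :
    R.pairing α β = 1 := by
  have hα := hqr.1
  have hαΦ := R.pos_mem hα
  classical
  set F := R.pos_finite.toFinset with hF
  set S := F.filter (fun β => R.refl α β ∉ R.pos) with hS
  -- 2ρ as a finset sum
  have h2ρ : R.twoRho = ∑ x ∈ F, x := by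
    rw [twoRho, ← R.pos_finite.coe_toFinset, finsum_mem_coe_finset]
  have hsplit : R.pairing α R.twoRho = ∑ x ∈ S, R.pairing α x := by
    rw [h2ρ, map_sum]
    rw [← Finset.sum_filter_add_sum_filter_not F (fun β => R.refl α β ∉ R.pos)
      (fun x => R.pairing α x)]
    have hzero : ∑ x ∈ F.filter (fun β => ¬ R.refl α β ∉ R.pos), R.pairing α x = 0 := by
      apply Finset.sum_involution (fun β _ => R.refl α β)
      · intro a ha
        rw [R.pairing_refl_self hαΦ]; ring
      · intro a ha hfa
        intro heq
        apply hfa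
        have h0 : a - R.pairing α a • α = a := by rw [← refl_apply]; exact heq
        rw [sub_eq_self] at h0
        rcases smul_eq_zero.mp h0 with h0 | h0
        · rw [h0]
        · exact absurd h0 (R.ne_zero_of_mem hαΦ)
      · intro a ha
        simp only [Finset.mem_filter, hF, Set.Finite.mem_toFinset, not_not] at ha ⊢
        exact ⟨ha.2, by rw [R.refl_refl hαΦ]; exact ha.1⟩
      · intro a ha
        exact R.refl_refl hαΦ a
    rw [hzero, add_zero]
  -- quantum root condition
  have hcard : (S.card : ℚ) = ∑ x ∈ S, R.pairing α x - 1 := by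
    have := hqr.2
    rw [hsplit] at this
    rw [← R.len_refl_eq_card]
    exact this
  have hαS : α ∈ S := by
    simp only [hS, Finset.mem_filter, hF, Set.Finite.mem_toFinset]
    refine ⟨hα, ?_⟩
    have : R.refl α α = -α := by rw [refl_apply, R.pairing_self α hαΦ]; module
    rw [this]
    exact R.not_pos_and_neg α hα
  have hβS : β ∈ S := by
    simp only [hS, Finset.mem_filter, hF, Set.Finite.mem_toFinset]
    exact ⟨hβ, hrβ⟩
  -- sum of (pairing - 1) over S equals 1
  have hsum1 : ∑ x ∈ S, (R.pairing α x - 1) = 1 := by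
    rw [Finset.sum_sub_distrib, Finset.sum_const, nsmul_eq_mul, mul_one]
    linarith [hcard]
  have hnonneg : ∀ x ∈ S, 0 ≤ R.pairing α x - 1 := by
    intro x hx
    simp only [hS, Finset.mem_filter, hF, Set.Finite.mem_toFinset] at hx
    linarith [R.one_le_pairing_of_inv hα hx.1 hx.2]
  have hpair : ({α, β} : Finset V) ⊆ S := by
    intro x hx
    simp only [Finset.mem_insert, Finset.mem_singleton] at hx
    rcases hx with rfl | rfl
    · exact hαS
    · exact hβS
  have hle : ∑ x ∈ ({α, β} : Finset V), (R.pairing α x - 1) ≤ 1 := by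
    have := Finset.sum_le_sum_of_subset_of_nonneg hpair
      (f := fun x => R.pairing α x - 1) (fun x hx _ => hnonneg x hx)
    rw [hsum1] at this
    exact this
  rw [Finset.sum_pair (Ne.symm hne)] at hle
  rw [R.pairing_self α hαΦ] at hle
  have := R.one_le_pairing_of_inv hα hβ hrβ
  linarith

end Aux5
section Aux6

lemma quantum_inv_subset {w : Module.End ℚ V} (hwΦ : ∀ x ∈ R.Φ, w x ∈ R.Φ)
    {α : V} (hα : α ∈ R.pos)
    (hlen : R.len w = R.len (w * R.refl α) + R.len (R.refl α)) :
    ∀ β ∈ R.pos, R.refl α β ∉ R.pos → w β ∉ R.pos := by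
  classical
  have hαΦ := R.pos_mem hα
  set S : Set V := {β | β ∈ R.pos ∧ R.refl α β ∉ R.pos} with hSdef
  set W : Set V := {β | β ∈ R.pos ∧ w β ∉ R.pos} with hWdef
  set T : Set V := {β | β ∈ R.pos ∧ w (R.refl α β) ∉ R.pos} with hTdef
  set A : Set V := {β | (β ∈ R.pos ∧ R.refl α β ∉ R.pos) ∧ w β ∈ R.pos} with hAdef
  intro β hβ hrβ
  by_contra hwβ
  have hβA : β ∈ A := ⟨⟨hβ, hrβ⟩, hwβ⟩
  -- finiteness
  have hSfin : S.Finite := R.pos_finite.subset (fun x hx => hx.1)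
  have hWfin : W.Finite := R.pos_finite.subset (fun x hx => hx.1)
  have hTfin : T.Finite := R.pos_finite.subset (fun x hx => hx.1)
  have hAfin : A.Finite := R.pos_finite.subset (fun x hx => hx.1.1)
  -- the two bijections
  have himg1 : (fun x => -(R.refl α x)) '' A = T ∩ S := by
    ext δ
    constructor
    · rintro ⟨b, ⟨⟨hb1, hb2⟩, hb3⟩, rfl⟩
      have hrbΦ : R.refl α b ∈ R.Φ := R.refl_mem hαΦ (R.pos_mem hb1)
      have hδpos : -(R.refl α b) ∈ R.pos := R.neg_pos hrbΦ hb2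
      have hre : R.refl α (-(R.refl α b)) = -b := by
        rw [map_neg, R.refl_refl hαΦ]
      constructor
      · refine ⟨hδpos, ?_⟩
        rw [hre, map_neg]
        exact R.not_pos_of_neg_pos (by rwa [neg_neg])
      · refine ⟨hδpos, ?_⟩
        rw [hre]
        exact R.not_pos_of_neg_pos (by rwa [neg_neg])
    · rintro ⟨⟨hδ1, hδ2⟩, ⟨_, hδ3⟩⟩
      refine ⟨-(R.refl α δ), ⟨⟨?_, ?_⟩, ?_⟩, ?_⟩
      · exact R.neg_pos (R.refl_mem hαΦ (R.pos_mem hδ1)) hδ3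
      · rw [map_neg, R.refl_refl hαΦ]
        exact R.not_pos_of_neg_pos (by rwa [neg_neg])
      · rw [map_neg]
        have hwr : w (R.refl α δ) ∈ R.Φ := hwΦ _ (R.refl_mem hαΦ (R.pos_mem hδ1))
        exact R.neg_pos hwr hδ2
      · show -(R.refl α (-(R.refl α δ))) = δ
        rw [map_neg, R.refl_refl hαΦ, neg_neg]
  have himg2 : (⇑(R.refl α)) '' (W \ S) = T \ S := by
    ext δ
    constructor
    · rintro ⟨b, ⟨⟨hb1, hb2⟩, hb3⟩, rfl⟩
      have hrb : R.refl α b ∈ R.pos := by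
        by_contra hc
        exact hb3 ⟨hb1, hc⟩
      constructor
      · refine ⟨hrb, ?_⟩
        rw [R.refl_refl hαΦ]
        exact hb2
      · rintro ⟨_, hc⟩
        rw [R.refl_refl hαΦ] at hc
        exact hc hb1
    · rintro ⟨⟨hδ1, hδ2⟩, hδ3⟩
      have hrδ : R.refl α δ ∈ R.pos := by
        by_contra hc
        exact hδ3 ⟨hδ1, hc⟩
      refine ⟨R.refl α δ, ⟨⟨hrδ, hδ2⟩, ?_⟩, R.refl_refl hαΦ δ⟩
      rintro ⟨_, hc⟩
      rw [R.refl_refl hαΦ] at hc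
      exact hc hδ1
  have hinj1 : Function.Injective (fun x : V => -(R.refl α x)) := by
    intro a b h
    simp only [neg_inj] at h
    exact R.refl_injective hαΦ h
  have hc1 : (T ∩ S).ncard = A.ncard := by
    rw [← himg1, Set.ncard_image_of_injective _ hinj1]
  have hc2 : (T \ S).ncard = (W \ S).ncard := by
    rw [← himg2, Set.ncard_image_of_injective _ (R.refl_injective hαΦ)]
  -- partitions
  have hT : (T ∩ S).ncard + (T \ S).ncard = T.ncard :=
    Set.ncard_inter_add_ncard_diff_eq_ncard T S hTfin
  have hW : (W ∩ S).ncard + (W \ S).ncard = W.ncard :=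
    Set.ncard_inter_add_ncard_diff_eq_ncard W S hWfin
  have hSsplit : (S ∩ W).ncard + (S \ W).ncard = S.ncard :=
    Set.ncard_inter_add_ncard_diff_eq_ncard S W hSfin
  have hSW : S \ W = A := by
    ext b
    constructor
    · rintro ⟨⟨hb1, hb2⟩, hb3⟩
      refine ⟨⟨hb1, hb2⟩, ?_⟩
      by_contra hc
      exact hb3 ⟨hb1, hc⟩
    · rintro ⟨⟨hb1, hb2⟩, hb3⟩
      exact ⟨⟨hb1, hb2⟩, fun hc => hc.2 hb3⟩
  -- lengths
  have hlenW : R.len w = W.ncard := rfl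
  have hlenT : R.len (w * R.refl α) = T.ncard := rfl
  have hlenS : R.len (R.refl α) = S.ncard := rfl
  rw [hlenW, hlenT, hlenS] at hlen
  rw [hSW] at hSsplit
  rw [Set.inter_comm S W] at hSsplit
  have hA0 : A.ncard = 0 := by omega
  have : β ∈ (∅ : Set V) := by
    rw [← (Set.ncard_eq_zero hAfin).mp hA0]
    exact hβA
  exact this

end Aux6
/-- If `w → w s_α` is a quantum edge and `γ ≠ -wα` is a maximal inversion of
`w`, then `γ` is a maximal inversion of `w s_α` (whose inverse is `s_α w⁻¹`)
and `⟨(-w⁻¹γ)^∨, α⟩ ≥ 0`. -/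
theorem maxInv_of_quantum_edge (w winv : Module.End ℚ V) (hw : R.IsWeyl w)
    (h₁ : w * winv = 1) (h₂ : winv * w = 1) (α : V) (hα : α ∈ R.pos)
    (hq : R.IsQuantumRoot α ∧ R.len w = R.len (w * R.refl α) + R.len (R.refl α))
    (γ : V) (hne : γ ≠ -(w α)) (hγ : R.IsMaxInv winv γ) :
    R.IsMaxInv (R.refl α * winv) γ ∧ 0 ≤ R.pairing (-(winv γ)) α := by
  have hwΦ := R.weyl_maps hw
  have hinvΦ := R.inv_maps hwΦ h₂
  have hid1 : ∀ x, w (winv x) = x := fun x => by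
    have : (w * winv) x = (1 : Module.End ℚ V) x := by rw [h₁]
    simpa using this
  have hid2 : ∀ x, winv (w x) = x := fun x => by
    have : (winv * w) x = (1 : Module.End ℚ V) x := by rw [h₂]
    simpa using this
  have hαΦ := R.pos_mem hα
  obtain ⟨hqr, hlen⟩ := hq
  have hNsub := R.quantum_inv_subset hwΦ hα hlen
  have hγpos : γ ∈ R.pos := hγ.1.1
  have hγΦ : γ ∈ R.Φ := R.pos_mem hγpos
  have hwinvγ : winv γ ∉ R.pos := hγ.1.2
  have hwinvγΦ : winv γ ∈ R.Φ := hinvΦ γ hγΦ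
  set θ : V := -(winv γ) with hθdef
  have hθpos : θ ∈ R.pos := R.neg_pos hwinvγΦ hwinvγ
  have hθΦ : θ ∈ R.Φ := R.pos_mem hθpos
  have hwθ : w θ = -γ := by
    rw [hθdef, map_neg, hid1]
  have hreflαα : R.refl α α ∉ R.pos := by
    have : R.refl α α = -α := by rw [refl_apply, R.pairing_self α hαΦ]; module
    rw [this]; exact R.not_pos_and_neg α hα
  have hwα : w α ∉ R.pos := hNsub α hα hreflαα
  have hwαΦ : w α ∈ R.Φ := hwΦ α hαΦ
  have hnwα : -(w α) ∈ R.pos := R.neg_pos hwαΦ hwα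
  have hnwα_inv : -(w α) ∈ R.inversions winv := by
    refine ⟨hnwα, ?_⟩
    rw [map_neg, hid2]
    exact R.not_pos_and_neg α hα
  have hnwα_ne : -(w α) ≠ γ := Ne.symm hne
  -- Claim: θ is not an inversion of s_α
  have hstar : R.refl α θ ∈ R.pos := by
    by_contra hc
    by_cases hθα : θ = α
    · apply hne
      have : winv γ = -α := by rw [← hθα, hθdef, neg_neg]
      calc γ = w (winv γ) := (hid1 γ).symm
        _ = w (-α) := by rw [this]
        _ = -(w α) := by rw [map_neg]
    · have hp1 : R.pairing α θ = 1 := R.quantum_pairing_one hqr hθpos hc hθα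
      have hαθΦ : -(R.refl α θ) ∈ R.pos := R.neg_pos (R.refl_mem hαΦ hθΦ) hc
      have he1 : -(R.refl α θ) = α - θ := by rw [refl_apply, hp1]; module
      rw [he1] at hαθΦ
      have he2 : R.refl α (α - θ) = -θ := by
        rw [refl_apply, map_sub, R.pairing_self α hαΦ, hp1]; module
      have hαθS : R.refl α (α - θ) ∉ R.pos := by
        rw [he2]; exact R.not_pos_and_neg θ hθpos
      have hwαθ : w (α - θ) ∉ R.pos := hNsub (α - θ) hαθΦ hαθS
      have hwαθΦ : w (α - θ) ∈ R.Φ := hwΦ _ (R.pos_mem hαθΦ)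
      have hneg : -(w (α - θ)) ∈ R.pos := R.neg_pos hwαθΦ hwαθ
      have he3 : -(w (α - θ)) = -(w α) - γ := by
        rw [map_sub, hwθ]; module
      rw [he3] at hneg
      exact hγ.2 (-(w α)) hnwα_inv hnwα_ne (AddSubmonoid.subset_closure (by
        have : -(w α) - γ ∈ R.pos := hneg
        exact this))
  constructor
  · constructor
    · refine ⟨hγpos, ?_⟩
      have happ : (R.refl α * winv) γ = R.refl α (winv γ) := rfl
      rw [happ]
      have : winv γ = -θ := by rw [hθdef, neg_neg]
      rw [this, map_neg]
      exact R.not_pos_and_neg _ hstar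
    · intro α' hα' hne'
      apply hγ.2 α' ?_ hne'
      obtain ⟨hα'pos, hα'neg⟩ := hα'
      refine ⟨hα'pos, ?_⟩
      intro hcc
      have happ : (R.refl α * winv) α' = R.refl α (winv α') := rfl
      rw [happ] at hα'neg
      have := hNsub (winv α') hcc hα'neg
      rw [hid1] at this
      exact this hα'pos
  · -- second part
    by_contra hneg
    push_neg at hneg
    have hθα : θ ≠ α := by
      intro hcc
      rw [hcc, R.pairing_self α hαΦ] at hneg
      norm_num at hneg
    have hθnα : θ ≠ -α := R.pos_ne_neg hθpos hα
    have hbnd := R.pairing_bounds hθΦ hαΦ hθα hθnα (ne_of_lt hneg)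
    obtain ⟨m, hm⟩ := R.pairing_int θ hθΦ α hαΦ
    obtain ⟨n, hn⟩ := R.pairing_int α hαΦ θ hθΦ
    rw [hm, hn] at hbnd
    have hb1 : 1 ≤ m * n := by exact_mod_cast hbnd.1
    have hb3 : m * n ≤ 3 := by exact_mod_cast hbnd.2
    have hmneg : m ≤ -1 := by
      have hm0 : (m:ℚ) < 0 := by rw [← hm]; exact hneg
      have : m < 0 := by exact_mod_cast hm0
      omega
    have hnneg : n ≤ -1 := by nlinarith
    have hdis : m = -1 ∨ n = -1 := by
      by_contra hcon; push_neg at hcon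
      have e1 : m ≤ -2 := by omega
      have e2 : n ≤ -2 := by omega
      nlinarith
    have hsumΦ : θ + α ∈ R.Φ := by
      rcases hdis with hc | hc
      · have e : R.refl θ α = θ + α := by rw [refl_apply, hm, hc]; push_cast; module
        rw [← e]; exact R.refl_mem hθΦ hαΦ
      · have e : R.refl α θ = θ + α := by rw [refl_apply, hn, hc]; push_cast; module
        rw [← e]; exact R.refl_mem hαΦ hθΦ
    have hsum_pos : θ + α ∈ R.pos := R.pos_add θ hθpos α hα hsumΦ
    have he : -(w (θ + α)) = γ + -(w α) := by rw [map_add, hwθ]; module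
    have hα'Φ : γ + -(w α) ∈ R.Φ := by
      rw [← he]; exact R.neg_mem _ (hwΦ _ (R.pos_mem hsum_pos))
    have hα'pos : γ + -(w α) ∈ R.pos := R.pos_add γ hγpos _ hnwα hα'Φ
    have hα'inv : winv (γ + -(w α)) ∉ R.pos := by
      have e2 : winv (γ + -(w α)) = -(θ + α) := by
        rw [map_add, map_neg, hid2, hθdef]; module
      rw [e2]
      exact R.not_pos_and_neg _ hsum_pos
    have hα'ne : γ + -(w α) ≠ γ := by
      intro hcc
      have h0 : -(w α) = 0 := by
        calc -(w α) = (γ + -(w α)) - γ := by module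
          _ = 0 := by rw [hcc, sub_self]
      exact R.ne_zero_of_mem hwαΦ (neg_eq_zero.mp h0)
    have e3 : (γ + -(w α)) - γ = -(w α) := by module
    exact hγ.2 (γ + -(w α)) ⟨hα'pos, hα'inv⟩ hα'ne
      (by rw [e3]; exact AddSubmonoid.subset_closure hnwα)
end RootSystemData
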